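/- Equivalence of the attachment-path contraction: let 𝓘 be an Activation 2-DP Augmentation instance with path P, and let 𝓘̂ be the 3-cost Hamiltonian instance obtained by replacing, for every pair u,v ∈ V(P) and every pair of levels (l_u,l_v), the cheapest attachment u–v path Q(l_u,l_v) with activation costs l_u at u and l_v at v by a single u–v edge with activation costs l_u, l_v and middle cost equal to the activation cost of Q(l_u,l_v) on its internal nodes, then deleting all nodes not on P. Then every feasible solution of 𝓘 can be converted into a feasible solution of 𝓘̂ of no greater total cost, and vice versa; in particular the two instances have equal optimal values. -/

import Mathlib

open SimpleGraph

def TwoDisjointPaths {V : Type*} (G : SimpleGraph V) (s t : V) : Prop :=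
  ∃ p q : G.Walk s t, p.IsPath ∧ q.IsPath ∧
    ∀ v, v ∈ p.support → v ∈ q.support → v = s ∨ v = t

open Classical in
/-- `ℓ_F(v) = max { c_e^v : e ∈ δ_F(v) }`. -/
noncomputable def ell (c : Sym2 ℕ → ℕ → NNReal) (F : Finset (Sym2 ℕ)) (v : ℕ) : NNReal :=
  (F.filter (fun e => v ∈ e)).sup (fun e => c e v)

/-- `Q` is an attachment `u`-`v` path: a path with both endpoints on `P` and no internal
node on `P`. -/
def IsAttach (E0 : Finset (Sym2 ℕ)) {s t : ℕ}
    (P : (fromEdgeSet (↑E0 : Set (Sym2 ℕ))).Walk s t) (u v : ℕ)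
    (Q : (fromEdgeSet (↑E0 : Set (Sym2 ℕ))).Walk u v) : Prop :=
  Q.IsPath ∧ u ∈ P.support ∧ v ∈ P.support ∧
    ∀ w ∈ Q.support, w ≠ u → w ≠ v → w ∉ P.support

/-- A chord `d = (u, v, l_u, l_v)` of the contracted instance `𝓘̂` is legitimate if there
is an attachment `u`-`v` path with activation cost `l_u` at `u` and `l_v` at `v`. -/
def ChordOK (E0 : Finset (Sym2 ℕ)) (c : Sym2 ℕ → ℕ → NNReal) {s t : ℕ}
    (P : (fromEdgeSet (↑E0 : Set (Sym2 ℕ))).Walk s t)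
    (d : ℕ × ℕ × NNReal × NNReal) : Prop :=
  ∃ Q : (fromEdgeSet (↑E0 : Set (Sym2 ℕ))).Walk d.1 d.2.1, IsAttach E0 P d.1 d.2.1 Q ∧
    ell c Q.edges.toFinset d.1 = d.2.2.1 ∧ ell c Q.edges.toFinset d.2.1 = d.2.2.2

/-- The middle cost of a chord `d = (u, v, l_u, l_v)`: the cheapest activation cost on
internal nodes of an attachment `u`-`v` path with endpoint activation costs `l_u, l_v`. -/
noncomputable def mcost (E0 : Finset (Sym2 ℕ)) (c : Sym2 ℕ → ℕ → NNReal) (Vfin : Finset ℕ)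
    {s t : ℕ} (P : (fromEdgeSet (↑E0 : Set (Sym2 ℕ))).Walk s t)
    (d : ℕ × ℕ × NNReal × NNReal) : NNReal :=
  sInf {a | ∃ Q : (fromEdgeSet (↑E0 : Set (Sym2 ℕ))).Walk d.1 d.2.1,
    IsAttach E0 P d.1 d.2.1 Q ∧
    ell c Q.edges.toFinset d.1 = d.2.2.1 ∧ ell c Q.edges.toFinset d.2.1 = d.2.2.2 ∧
    a = ∑ w ∈ Vfin \ {d.1, d.2.1}, ell c Q.edges.toFinset w}

/-- A feasible solution of the instance `𝓘`: an edge set `F ⊆ E` such that `P ∪ F`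
contains two internally disjoint `s`-`t` paths. -/
def Feas1 (E0 : Finset (Sym2 ℕ)) {s t : ℕ}
    (P : (fromEdgeSet (↑E0 : Set (Sym2 ℕ))).Walk s t) (F : Finset (Sym2 ℕ)) : Prop :=
  F ⊆ E0 ∧ TwoDisjointPaths (fromEdgeSet ((↑F : Set (Sym2 ℕ)) ∪ {e | e ∈ P.edges})) s t

/-- The cost of a feasible solution of `𝓘`: `ℓ_F(V)`. -/
noncomputable def Cost1 (c : Sym2 ℕ → ℕ → NNReal) (Vfin : Finset ℕ)
    (F : Finset (Sym2 ℕ)) : NNReal :=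
  ∑ v ∈ Vfin, ell c F v

/-- A feasible solution of the contracted 3-cost Hamiltonian instance `𝓘̂`: a set `D` of
legitimate chords such that `P` together with the chord edges contains two internally
disjoint `s`-`t` paths. -/
def Feas2 (E0 : Finset (Sym2 ℕ)) (c : Sym2 ℕ → ℕ → NNReal) {s t : ℕ}
    (P : (fromEdgeSet (↑E0 : Set (Sym2 ℕ))).Walk s t)
    (D : Finset (ℕ × ℕ × NNReal × NNReal)) : Prop :=
  (∀ d ∈ D, ChordOK E0 c P d) ∧
    TwoDisjointPaths
      (fromEdgeSet ({e | e ∈ P.edges} ∪ {e | ∃ d ∈ D, e = s(d.1, d.2.1)})) s t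

open Classical in
/-- The total cost `τ(D)` of a solution of `𝓘̂`: activation cost (at each node, the
maximum level forced by an incident chord) plus the middle costs of the chords. -/
noncomputable def Cost2 (E0 : Finset (Sym2 ℕ)) (c : Sym2 ℕ → ℕ → NNReal) (Vfin : Finset ℕ)
    {s t : ℕ} (P : (fromEdgeSet (↑E0 : Set (Sym2 ℕ))).Walk s t)
    (D : Finset (ℕ × ℕ × NNReal × NNReal)) : NNReal :=
  (∑ v ∈ Vfin, (D.filter (fun d => d.1 = v ∨ d.2.1 = v)).sup
      (fun d => if d.1 = v then d.2.2.1 else d.2.2.2))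
    + ∑ d ∈ D, mcost E0 c Vfin P d

/-!
A feasible `F` gives two internally disjoint `s`–`t` paths in `P ∪ F`. Each of them splits at its
nodes on `P` into attachment paths, and replacing every attachment path by its chord gives two
disjoint paths of the contracted instance. Since `P` costs nothing, the level a chord asks for at
a node of `P` is at most `ℓ_F` there; the middle cost of a chord is at most the cost of the
internal nodes of its attachment path, and attachment paths taken from the two paths share no
node off `P`, so the middle costs are paid by disjoint parts of `ℓ_F`.

Conversely, realize every chord of a solution `D` by a cheapest attachment path and let `F` be the
union of their edges; the costs compare in the same way. The realizing paths of different chords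
may intersect, so the two paths of `D` cannot simply be expanded. Instead, every node `w ≠ s, t`
is avoided by some `s`–`t` walk of `P ∪ F` (by `P` if `w` is off `P`, otherwise by the expansion
of one of the two paths of `D`), and Menger's theorem for two paths gives feasibility.
-/

namespace SimpleGraph

variable {V : Type*} {G H : SimpleGraph V}

namespace Walk

theorem exists_eq_append_of_exists_mem_support (T : Set V) :
    ∀ {a b : V} (W : G.Walk a b), (∃ r ∈ W.support, r ∈ T) →
      ∃ z ∈ T, ∃ (ρ : G.Walk a z) (σ : G.Walk z b), W = ρ.append σ ∧
        ∀ r ∈ ρ.support, r ∈ T → r = z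
  | a, _, nil, ⟨r, hr, hrT⟩ => by
    rw [support_nil, List.mem_singleton] at hr
    exact ⟨a, hr ▸ hrT, nil, nil, rfl, by simp⟩
  | a, _, cons hadj W, hW => by
    by_cases haT : a ∈ T
    · exact ⟨a, haT, nil, cons hadj W, rfl, by simp⟩
    obtain ⟨r, hr, hrT⟩ := hW
    have hrW : r ∈ W.support := by
      rcases List.mem_cons.1 (support_cons _ _ ▸ hr) with rfl | hr
      · exact absurd hrT haT
      · exact hr
    obtain ⟨z, hzT, ρ, σ, rfl, hρ⟩ := exists_eq_append_of_exists_mem_support T W ⟨r, hrW, hrT⟩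
    refine ⟨z, hzT, cons hadj ρ, σ, rfl, fun r hr hrT => ?_⟩
    rcases List.mem_cons.1 (support_cons _ _ ▸ hr) with rfl | hr
    · exact absurd hrT haT
    · exact hρ r hr hrT

theorem mem_support_of_edges_subset {a b c d r : V} {p : G.Walk a b} {q : H.Walk c d}
    (h : p.edges ⊆ q.edges) (hr : r ∈ p.support) (hrb : r ≠ b) : r ∈ q.support := by
  obtain rfl | ⟨e, he, hre⟩ := mem_support_iff_exists_mem_edges.1 hr
  · exact absurd rfl hrb
  · exact mem_support_of_mem_edges (h he) hre

theorem notMem_support_deleteEdges {S : Set (Sym2 V)} {w a b : V} (hS : ∀ e, w ∈ e → e ∈ S)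
    (ω : (G.deleteEdges S).Walk a b) (hwb : w ≠ b) : w ∉ ω.support := fun hw => by
  obtain rfl | ⟨e, he, hwe⟩ := mem_support_iff_exists_mem_edges.1 hw
  · exact hwb rfl
  · have := ω.edges_subset_edgeSet he
    rw [edgeSet_deleteEdges] at this
    exact this.2 (hS e hwe)

theorem IsPath.eq_of_mem_support_append {u v w r : V} {p : G.Walk u v} {q : G.Walk v w}
    (hpq : (p.append q).IsPath) (hp : r ∈ p.support) (hq : r ∈ q.support) : r = v := by
  by_contra h
  exact hpq.ne_of_mem_support_of_append h hp hq rfl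

theorem IsPath.append {u v w : V} {p : G.Walk u v} {q : G.Walk v w} (hp : p.IsPath)
    (hq : q.IsPath) (h : ∀ r ∈ p.support, r ∈ q.support → r = v) : (p.append q).IsPath := by
  rw [isPath_def, support_append, List.nodup_append]
  have hq' := hq.support_nodup
  rw [← cons_tail_support, List.nodup_cons] at hq'
  refine ⟨hp.support_nodup, hq'.2, fun r hrp r' hrq hrr => ?_⟩
  subst hrr
  obtain rfl := h r hrp (by rw [← cons_tail_support]; exact List.mem_cons_of_mem _ hrq)
  exact hq'.1 hrq

theorem IsPath.notMem_support_takeUntil [DecidableEq V] {u v w r : V} {p : G.Walk u v}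
    (hp : p.IsPath) (hr : r ∈ p.support) (hw : w ∈ p.support → w = v) (hrw : r ≠ w) :
    w ∉ (p.takeUntil r hr).support := fun h => by
  obtain rfl := hw (p.support_takeUntil_subset_support hr h)
  exact endpoint_notMem_support_takeUntil hp hr hrw.symm h

/-- The walk with the first and the last edge of an `s`–`t` path removed. -/
theorem IsPath.exists_interior_walk {s t : V} (hst : s ≠ t) (hadj : ¬G.Adj s t)
    {W : G.Walk s t} (hW : W.IsPath) :
    ∃ a ∈ G.neighborSet s, ∃ b ∈ G.neighborSet t,
      ∃ ω : (G.deleteEdges {e | s ∈ e ∨ t ∈ e}).Walk a b, ω.support ⊆ W.support := by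
  cases W with
  | nil => exact absurd rfl hst
  | cons hsa W₁ =>
    cases W₁ with
    | nil => exact absurd hsa hadj
    | cons h p =>
      obtain ⟨b, q, hbt, hq⟩ := exists_cons_eq_concat h p
      rw [hq] at hW ⊢
      simp only [cons_isPath_iff, concat_isPath_iff, support_concat, List.mem_append,
        List.mem_singleton, not_or] at hW
      refine ⟨_, hsa, b, hbt.symm, q.toDeleteEdges _ fun e he hste => ?_, fun r hr => ?_⟩
      · rcases hste with h | h
        exacts [hW.2.1 (q.mem_support_of_mem_edges he h), hW.1.2 (q.mem_support_of_mem_edges he h)]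
      · rw [support_transfer] at hr
        simp [support_concat, hr]

end Walk

def Separates (G : SimpleGraph V) (v : V) (A B : Set V) : Prop :=
  ∀ a ∈ A, ∀ b ∈ B, ∀ W : G.Walk a b, v ∈ W.support

def TwoDisjointPathsBetween (G : SimpleGraph V) (A B : Set V) : Prop :=
  ∃ a₁ ∈ A, ∃ b₁ ∈ B, ∃ a₂ ∈ A, ∃ b₂ ∈ B, ∃ (W₁ : G.Walk a₁ b₁) (W₂ : G.Walk a₂ b₂),
    W₁.IsPath ∧ W₂.IsPath ∧ W₁.support.Disjoint W₂.support

variable {A B : Set V} {x y v : V}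

namespace Separates

theorem symm (h : G.Separates v A B) : G.Separates v B A := fun b hb a ha W => by
  simpa using h a ha b hb W.reverse

theorem mono_right {B' : Set V} (h : G.Separates v A B) (hB : B' ⊆ B) : G.Separates v A B' :=
  fun a ha b hb => h a ha b (hB hb)

theorem trans {t : V} (hv : G.Separates v A B) (ht : G.Separates t A {v}) :
    G.Separates t A B := by
  classical
  exact fun a ha b hb W =>
    W.support_takeUntil_subset_support _ (ht a ha v rfl (W.takeUntil v (hv a ha b hb W)))

theorem mem_or_mem (h : G.Separates v A B) {a b r : V} (ha : a ∈ A) (hb : b ∈ B)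
    (p : G.Walk a r) (q : G.Walk b r) : v ∈ p.support ∨ v ∈ q.support := by
  simpa [Walk.mem_support_append_iff] using h a ha b hb (p.append q.reverse)

theorem eq_of_mem_support (h : G.Separates v A B) {a b c d r : V} (ha : a ∈ A) (hb : b ∈ B)
    {p : G.Walk a c} {q : G.Walk b d} (hp : p.IsPath) (hq : q.IsPath)
    (hvp : v ∈ p.support → v = c) (hvq : v ∈ q.support → v = d)
    (hrp : r ∈ p.support) (hrq : r ∈ q.support) : r = v := by
  classical
  by_contra hrv
  rcases h.mem_or_mem ha hb (p.takeUntil r hrp) (q.takeUntil r hrq) with h | h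
  · exact hp.notMem_support_takeUntil hrp hvp hrv h
  · exact hq.notMem_support_takeUntil hrq hvq hrv h

theorem separates_insert_or (hv : G.Separates v A B) (z : V) :
    G.Separates v A {v, z} ∨ G.Separates v B {v, z} := by
  by_contra! h
  simp only [Separates, Set.mem_insert_iff, Set.mem_singleton_iff, not_forall] at h
  obtain ⟨⟨a, ha, c, hc, p, hp⟩, ⟨b, hb, d, hd, q, hq⟩⟩ := h
  obtain rfl : c = z := hc.resolve_left (by rintro rfl; exact hp p.end_mem_support)
  obtain rfl : d = c := hd.resolve_left (by rintro rfl; exact hq q.end_mem_support)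
  exact (hv.mem_or_mem ha hb p q).elim hp hq

end Separates

namespace TwoDisjointPathsBetween

theorem mono (hle : G ≤ H) (h : G.TwoDisjointPathsBetween A B) :
    H.TwoDisjointPathsBetween A B := by
  obtain ⟨a₁, ha₁, b₁, hb₁, a₂, ha₂, b₂, hb₂, W₁, W₂, hW₁, hW₂, hdisj⟩ := h
  exact ⟨a₁, ha₁, b₁, hb₁, a₂, ha₂, b₂, hb₂, W₁.mapLe hle, W₂.mapLe hle, hW₁.mapLe hle,
    hW₂.mapLe hle, by simpa [Walk.support_mapLe_eq_support] using hdisj⟩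

theorem exists_fan {z : V} (h : G.TwoDisjointPathsBetween A {v, z}) :
    ∃ a₁ ∈ A, ∃ a₂ ∈ A, ∃ (pv : G.Walk a₁ v) (pz : G.Walk a₂ z),
      pv.IsPath ∧ pz.IsPath ∧ pv.support.Disjoint pz.support := by
  obtain ⟨a₁, ha₁, c₁, hc₁, a₂, ha₂, c₂, hc₂, W₁, W₂, hW₁, hW₂, hdisj⟩ := h
  have hc : c₁ ≠ c₂ := fun h => hdisj W₁.end_mem_support (h ▸ W₂.end_mem_support)
  simp only [Set.mem_insert_iff, Set.mem_singleton_iff] at hc₁ hc₂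
  rcases hc₁ with rfl | rfl <;> rcases hc₂ with rfl | rfl
  · exact absurd rfl hc
  · exact ⟨a₁, ha₁, a₂, ha₂, W₁, W₂, hW₁, hW₂, hdisj⟩
  · exact ⟨a₂, ha₂, a₁, ha₁, W₂, W₁, hW₂, hW₁, hdisj.symm⟩
  · exact absurd rfl hc

end TwoDisjointPathsBetween

/-- If `t` separates `A` from `B` and from `x` once the edge `xy` is deleted, an `A`–`B` walk
avoiding `t` has to cross `xy` from `y` to `x`. -/
theorem exists_walks_of_separates_deleteEdges {t a b : V} (hxy : x ≠ y)
    (hAB : (G.deleteEdges {s(x, y)}).Separates t A B)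
    (hAx : (G.deleteEdges {s(x, y)}).Separates t A {x}) (ha : a ∈ A) (hb : b ∈ B)
    (W : G.Walk a b) (ht : t ∉ W.support) :
    (∃ p : (G.deleteEdges {s(x, y)}).Walk a y, t ∉ p.support) ∧
      ∃ q : (G.deleteEdges {s(x, y)}).Walk x b, t ∉ q.support := by
  have firstHit : ∀ {c d : V} (U : G.Walk c d), t ∉ U.support →
      (∃ r ∈ U.support, r ∈ ({x, y} : Set V)) →
      ∃ z ∈ ({x, y} : Set V), ∃ ρ : (G.deleteEdges {s(x, y)}).Walk c z, t ∉ ρ.support := by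
    intro c d U htU hU
    obtain ⟨z, hz, ρ, σ, rfl, hρ⟩ := U.exists_eq_append_of_exists_mem_support _ hU
    have he : s(x, y) ∉ ρ.edges := fun he =>
      hxy ((hρ x (ρ.fst_mem_support_of_mem_edges he) (by simp)).trans
        (hρ y (ρ.snd_mem_support_of_mem_edges he) (by simp)).symm)
    refine ⟨z, hz, ρ.toDeleteEdge _ he, ?_⟩
    rw [Walk.support_transfer]
    exact fun h => htU (Walk.mem_support_append_iff _ _ |>.2 (Or.inl h))
  have hmeet : ∃ r ∈ W.support, r ∈ ({x, y} : Set V) := by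
    by_contra hno
    have he : s(x, y) ∉ W.edges := fun he => hno ⟨x, W.fst_mem_support_of_mem_edges he, by simp⟩
    exact ht (by simpa using hAB a ha b hb (W.toDeleteEdge _ he))
  obtain ⟨z, hz, p, hp⟩ := firstHit W ht hmeet
  obtain ⟨z', hz', q, hq⟩ := firstHit W.reverse (by simpa using ht) (by simpa using hmeet)
  simp only [Set.mem_insert_iff, Set.mem_singleton_iff] at hz hz'
  rcases hz with rfl | rfl
  · exact absurd (hAx a ha _ rfl p) hp
  rcases hz' with rfl | rfl
  · exact ⟨⟨p, hp⟩, q.reverse, by simpa using hq⟩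
  · have := hAB a ha b hb (p.append q.reverse)
    simp [Walk.mem_support_append_iff, hp, hq] at this

/-- If neither holds, there are cut vertices `t₁`, `t₂`. An `A`–`B` walk avoiding `t₁` crosses
`xy` from `y` to `x`, one avoiding `t₂` crosses it from `x` to `y`, and splicing their pieces at
`t₂` gives an `A`–`B` walk of `G - xy` avoiding `t₁`. -/
theorem forall_not_separates_insert_or (hxy : x ≠ y) (h : ∀ τ, ¬G.Separates τ A B)
    (hv : (G.deleteEdges {s(x, y)}).Separates v A B) :
    (∀ τ, ¬(G.deleteEdges {s(x, y)}).Separates τ A {v, x}) ∨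
      ∀ τ, ¬(G.deleteEdges {s(x, y)}).Separates τ A {v, y} := by
  classical
  by_contra! ⟨⟨t₁, hx⟩, ⟨t₂, hy⟩⟩
  have hsep : ∀ {t z}, (G.deleteEdges {s(x, y)}).Separates t A {v, z} →
      (G.deleteEdges {s(x, y)}).Separates t A B := fun ht =>
    hv.trans (ht.mono_right (by simp))
  have hwalk : ∀ τ, ∃ a ∈ A, ∃ b ∈ B, ∃ W : G.Walk a b, τ ∉ W.support := by
    simpa [Separates] using h
  obtain ⟨a₁, ha₁, b₁, hb₁, R₁, hR₁⟩ := hwalk t₁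
  obtain ⟨⟨p₁, hp₁⟩, q₁, hq₁⟩ := exists_walks_of_separates_deleteEdges hxy (hsep hx)
    (hx.mono_right (by simp)) ha₁ hb₁ R₁ hR₁
  obtain ⟨a₂, ha₂, b₂, hb₂, R₂, hR₂⟩ := hwalk t₂
  obtain ⟨⟨p₂, hp₂⟩, -⟩ : (∃ p : (G.deleteEdges {s(x, y)}).Walk a₂ x, t₂ ∉ p.support) ∧
      ∃ q : (G.deleteEdges {s(x, y)}).Walk y b₂, t₂ ∉ q.support := by
    rw [Sym2.eq_swap] at hy ⊢
    exact exists_walks_of_separates_deleteEdges hxy.symm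
      (by rw [Sym2.eq_swap] at hy ⊢; exact hsep hy) (hy.mono_right (by simp)) ha₂ hb₂ R₂ hR₂
  have ht₂p₁ : t₂ ∈ p₁.support := hy a₁ ha₁ y (by simp) p₁
  have ht₂q₁ : t₂ ∈ q₁.support := by
    have := hsep hy a₂ ha₂ b₁ hb₁ (p₂.append q₁)
    rw [Walk.mem_support_append_iff] at this
    exact this.resolve_left hp₂
  have := hsep hx a₁ ha₁ b₁ hb₁ ((p₁.takeUntil t₂ ht₂p₁).append (q₁.dropUntil t₂ ht₂q₁))
  rcases (Walk.mem_support_append_iff _ _).1 this with h | h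
  · exact hp₁ (p₁.support_takeUntil_subset_support _ h)
  · exact hq₁ (q₁.support_dropUntil_subset_support _ h)

/-- The `v`-ends of the two fans meet in `v`; the other ends are joined by `xy`. -/
theorem twoDisjointPathsBetween_of_fans (hxy : G.Adj x y)
    (hv : (G.deleteEdges {s(x, y)}).Separates v A B)
    (hA : (G.deleteEdges {s(x, y)}).TwoDisjointPathsBetween A {v, x})
    (hB : (G.deleteEdges {s(x, y)}).TwoDisjointPathsBetween B {v, y}) :
    G.TwoDisjointPathsBetween A B := by
  obtain ⟨a₁, ha₁, a₂, ha₂, pv, px, hpv, hpx, hApv⟩ := hA.exists_fan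
  obtain ⟨b₁, hb₁, b₂, hb₂, qv, qy, hqv, hqy, hBqv⟩ := hB.exists_fan
  have hvpx : v ∉ px.support := fun h => hApv pv.end_mem_support h
  have hvqy : v ∉ qy.support := fun h => hBqv qv.end_mem_support h
  have hpxqy : ∀ r ∈ px.support, r ∉ qy.support := fun r hr hr' =>
    hvpx (hv.eq_of_mem_support ha₂ hb₂ hpx hqy (absurd · hvpx) (absurd · hvqy) hr hr' ▸ hr)
  have hle := G.deleteEdges_le {s(x, y)}
  refine ⟨a₁, ha₁, b₁, hb₁, a₂, ha₂, b₂, hb₂, (pv.append qv.reverse).mapLe hle,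
    (px.mapLe hle).append (.cons hxy (qy.reverse.mapLe hle)), ?_, ?_, ?_⟩
  · refine (hpv.append hqv.reverse fun r hr hr' => ?_).mapLe hle
    exact hv.eq_of_mem_support ha₁ hb₁ hpv hqv (fun _ => rfl) (fun _ => rfl) hr
      (by simpa using hr')
  · refine (hpx.mapLe hle).append ?_ fun r hr hr' => ?_
    · refine (hqy.reverse.mapLe hle).cons ?_
      simpa [Walk.support_mapLe_eq_support] using hpxqy x px.end_mem_support
    · simp only [Walk.support_mapLe_eq_support, Walk.support_cons, Walk.support_reverse,
        List.mem_cons, List.mem_reverse] at hr hr'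
      exact hr'.resolve_right (hpxqy r hr)
  · intro r hr hr'
    have h₁ : r ∈ pv.support ∨ r ∈ qv.support := by
      simpa [Walk.support_mapLe_eq_support, Walk.mem_support_append_iff] using hr
    have h₂ : r ∈ px.support ∨ r ∈ qy.support := by
      simp only [Walk.support_mapLe_eq_support, Walk.mem_support_append_iff, Walk.support_cons,
        List.mem_cons, Walk.support_reverse, List.mem_reverse] at hr'
      rcases hr' with h | rfl | h
      exacts [.inl h, .inl px.end_mem_support, .inr h]
    rcases h₁ with h₁ | h₁ <;> rcases h₂ with h₂ | h₂
    · exact hApv h₁ h₂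
    · exact hvqy (hv.eq_of_mem_support ha₁ hb₂ hpv hqy (fun _ => rfl) (absurd · hvqy) h₁ h₂ ▸ h₂)
    · exact hvpx (hv.eq_of_mem_support ha₂ hb₁ hpx hqv (absurd · hvpx) (fun _ => rfl) h₂ h₁ ▸ h₂)
    · exact hBqv h₁ h₂

/-- Menger's theorem for two paths, by induction on the number of edges: if deleting an edge
`xy` creates a cut vertex `v`, two disjoint paths are glued from fans to `{v, x}` and
`{v, y}` in `G - xy`. -/
theorem twoDisjointPathsBetween_of_forall_not_separates [Nonempty V] (hG : G.edgeSet.Finite)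
    (h : ∀ v, ¬G.Separates v A B) : G.TwoDisjointPathsBetween A B := by
  classical
  obtain ⟨n, hn⟩ : ∃ n, G.edgeSet.ncard = n := ⟨_, rfl⟩
  induction n using Nat.strong_induction_on generalizing G A B with
  | _ n ih =>
  have hwalk : ∀ τ, ∃ a ∈ A, ∃ b ∈ B, ∃ W : G.Walk a b, τ ∉ W.support := by
    simpa [Separates] using h
  by_cases hAB : ∃ r ∈ A, r ∈ B
  · obtain ⟨r, hrA, hrB⟩ := hAB
    obtain ⟨a, ha, b, hb, W, hW⟩ := hwalk r
    exact ⟨a, ha, b, hb, r, hrA, r, hrB, W.bypass, .nil, W.bypass_isPath, by simp,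
      by simpa using fun h' => hW (W.support_bypass_subset_support h')⟩
  obtain ⟨x, hx, b, hb, W, -⟩ := hwalk (Classical.arbitrary V)
  obtain ⟨y, hxy⟩ : ∃ y, G.Adj x y := by
    cases W with
    | nil => exact absurd ⟨x, hx, hb⟩ hAB
    | cons hxy _ => exact ⟨_, hxy⟩
  set G' := G.deleteEdges {s(x, y)}
  have hG' : G'.edgeSet.Finite := hG.subset (edgeSet_mono (G.deleteEdges_le _))
  have ih' : ∀ {A' B' : Set V}, (∀ τ, ¬G'.Separates τ A' B') →
      G'.TwoDisjointPathsBetween A' B' := fun h' => ih _ (hn ▸ by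
    simpa [G', edgeSet_deleteEdges] using
      Set.ncard_sdiff_singleton_lt_of_mem (G.mem_edgeSet.2 hxy) hG) hG' h' rfl
  by_cases hfree : ∀ v, ¬G'.Separates v A B
  · exact (ih' hfree).mono (G.deleteEdges_le _)
  obtain ⟨v, hv⟩ := not_forall_not.1 hfree
  have hB := forall_not_separates_insert_or hxy.ne (fun τ hτ => h τ hτ.symm) hv.symm
  rcases forall_not_separates_insert_or hxy.ne h hv with hAx | hAy
  · have hBy := hB.resolve_left fun hBx => (hv.separates_insert_or x).elim (hAx v) (hBx v)
    exact twoDisjointPathsBetween_of_fans hxy hv (ih' hAx) (ih' hBy)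
  · have hBx := hB.resolve_right fun hBy => (hv.separates_insert_or y).elim (hAy v) (hBy v)
    have hfans := twoDisjointPathsBetween_of_fans (A := A) (B := B) (v := v) hxy.symm
    rw [Sym2.eq_swap] at hfans
    exact hfans hv (ih' hAy) (ih' hBx)

/-- The `s`–`t` form: apply the `A`–`B` form to the neighbourhoods of `s` and `t` in the graph
without the edges at `s` and `t`. -/
theorem twoDisjointPaths_of_forall_exists_walk_notMem (hG : G.edgeSet.Finite) {s t : V}
    (hst : s ≠ t) (W₀ : G.Walk s t)
    (h : ∀ w, w ≠ s → w ≠ t → ∃ W : G.Walk s t, w ∉ W.support) : TwoDisjointPaths G s t := by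
  classical
  have : Nonempty V := ⟨s⟩
  by_cases hadj : G.Adj s t
  · have hp : (Walk.cons hadj .nil).IsPath := by simp [hst]
    exact ⟨_, _, hp, hp, fun v hv _ => by simpa using hv⟩
  set H := G.deleteEdges {e | s ∈ e ∨ t ∈ e}
  have hle : H ≤ G := G.deleteEdges_le _
  have hoff : ∀ {a b : V} (ω : H.Walk a b), G.Adj t b → s ∉ ω.support ∧ t ∉ ω.support :=
    fun ω hb => ⟨Walk.notMem_support_deleteEdges (fun _ he => .inl he) ω
      (by rintro rfl; exact hadj hb.symm),
      Walk.notMem_support_deleteEdges (fun _ he => .inr he) ω hb.ne⟩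
  have hfree : ∀ τ, ¬H.Separates τ (G.neighborSet s) (G.neighborSet t) := by
    intro τ hτ
    by_cases hτst : τ = s ∨ τ = t
    · obtain ⟨a, ha, b, hb, ω, -⟩ := W₀.bypass_isPath.exists_interior_walk hst hadj
      have := hτ a ha b hb ω
      rcases hτst with rfl | rfl
      exacts [(hoff ω hb).1 this, (hoff ω hb).2 this]
    · obtain ⟨W, hW⟩ := h τ (not_or.1 hτst).1 (not_or.1 hτst).2
      obtain ⟨a, ha, b, hb, ω, hω⟩ := W.bypass_isPath.exists_interior_walk hst hadj
      exact hW (W.support_bypass_subset_support (hω (hτ a ha b hb ω)))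
  obtain ⟨a₁, ha₁, b₁, hb₁, a₂, ha₂, b₂, hb₂, ω₁, ω₂, hω₁, hω₂, hdisj⟩ :=
    twoDisjointPathsBetween_of_forall_not_separates (hG.subset (edgeSet_mono hle)) hfree
  rw [mem_neighborSet] at ha₁ ha₂ hb₁ hb₂
  have hpath : ∀ {a b} (ha : G.Adj s a) (hb : G.Adj t b) {ω : H.Walk a b}, ω.IsPath →
      (Walk.cons ha ((ω.mapLe hle).concat hb.symm)).IsPath := fun ha hb ω hω => by
    simp [Walk.cons_isPath_iff, Walk.concat_isPath_iff, hω.mapLe hle, (hoff ω hb).1,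
      (hoff ω hb).2, hst]
  refine ⟨_, _, hpath ha₁ hb₁ hω₁, hpath ha₂ hb₂ hω₂, fun r hr₁ hr₂ => ?_⟩
  simp only [Walk.support_cons, Walk.support_concat, Walk.support_mapLe_eq_support,
    List.mem_cons, List.mem_append, List.not_mem_nil, or_false] at hr₁ hr₂
  rcases hr₁ with h₁ | h₁ | h₁
  · exact .inl h₁
  · rcases hr₂ with h₂ | h₂ | h₂
    exacts [.inl h₂, (hdisj h₁ h₂).elim, .inr h₂]
  · exact .inr h₁

end SimpleGraph

theorem Finset.sum_le_of_subsingleton_ne_zero {ι M : Type*} [AddCommMonoid M] [PartialOrder M]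
    [CanonicallyOrderedAdd M] {S : Finset ι} {f : ι → M} {g : M} (hle : ∀ i ∈ S, f i ≤ g)
    (huniq : ∀ i ∈ S, ∀ j ∈ S, f i ≠ 0 → f j ≠ 0 → i = j) : ∑ i ∈ S, f i ≤ g := by
  by_cases h : ∃ i ∈ S, f i ≠ 0
  · obtain ⟨i, hi, hfi⟩ := h
    rw [Finset.sum_eq_single_of_mem i hi fun j hj hji =>
      by_contra fun hfj => hji (huniq j hj i hi hfj hfi)]
    exact hle i hi
  · simp only [not_exists, not_and, not_not] at h
    rw [Finset.sum_eq_zero h]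
    exact zero_le

theorem sInf_eq_of_forall_exists_le {α β γ : Type*} [CompleteLattice γ] {p : α → Prop}
    {q : β → Prop} {f : α → γ} {g : β → γ} (hpq : ∀ a, p a → ∃ b, q b ∧ g b ≤ f a)
    (hqp : ∀ b, q b → ∃ a, p a ∧ f a ≤ g b) :
    sInf {x | ∃ a, p a ∧ x = f a} = sInf {x | ∃ b, q b ∧ x = g b} := by
  refine le_antisymm (le_sInf ?_) (le_sInf ?_) <;> rintro _ ⟨y, hy, rfl⟩
  · obtain ⟨a, ha, hle⟩ := hqp y hy
    exact le_trans (sInf_le (by exact ⟨a, ha, rfl⟩)) hle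
  · obtain ⟨b, hb, hle⟩ := hpq y hy
    exact le_trans (sInf_le (by exact ⟨b, hb, rfl⟩)) hle

def chordLevel (d : ℕ × ℕ × NNReal × NNReal) (v : ℕ) : NNReal :=
  if d.1 = v then d.2.2.1 else d.2.2.2

open Classical in
noncomputable def endpointLevel (D : Finset (ℕ × ℕ × NNReal × NNReal)) (v : ℕ) : NNReal :=
  (D.filter (fun d => d.1 = v ∨ d.2.1 = v)).sup (chordLevel · v)

noncomputable def chordOf (c : Sym2 ℕ → ℕ → NNReal) {G : SimpleGraph ℕ}
    (x : Σ u v : ℕ, G.Walk u v) : ℕ × ℕ × NNReal × NNReal :=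
  (x.1, x.2.1, ell c x.2.2.edges.toFinset x.1, ell c x.2.2.edges.toFinset x.2.1)

abbrev augmentedGraph {E0 : Finset (Sym2 ℕ)} {s t : ℕ}
    (P : (fromEdgeSet (↑E0 : Set (Sym2 ℕ))).Walk s t) (F : Finset (Sym2 ℕ)) : SimpleGraph ℕ :=
  fromEdgeSet ((↑F : Set (Sym2 ℕ)) ∪ {e | e ∈ P.edges})

abbrev contractedGraph {E0 : Finset (Sym2 ℕ)} {s t : ℕ}
    (P : (fromEdgeSet (↑E0 : Set (Sym2 ℕ))).Walk s t)
    (D : Finset (ℕ × ℕ × NNReal × NNReal)) : SimpleGraph ℕ :=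
  fromEdgeSet ({e | e ∈ P.edges} ∪ {e | ∃ d ∈ D, e = s(d.1, d.2.1)})

def OffPathDisjoint {E0 : Finset (Sym2 ℕ)} {s t : ℕ}
    (P : (fromEdgeSet (↑E0 : Set (Sym2 ℕ))).Walk s t)
    (x y : Σ a b : ℕ, (fromEdgeSet (↑E0 : Set (Sym2 ℕ))).Walk a b) : Prop :=
  ∀ r ∈ x.2.2.support, r ∈ y.2.2.support → r ∈ P.support

section Contraction

variable {c : Sym2 ℕ → ℕ → NNReal} {E0 : Finset (Sym2 ℕ)} {Vfin : Finset ℕ} {s t : ℕ}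
  {P : (fromEdgeSet (↑E0 : Set (Sym2 ℕ))).Walk s t}

instance : Std.Symm (OffPathDisjoint P) := ⟨fun _ _ h r hy hx => h r hx hy⟩

theorem ell_le_iff {T : Finset (Sym2 ℕ)} {v : ℕ} {X : NNReal} :
    ell c T v ≤ X ↔ ∀ f ∈ T, v ∈ f → c f v ≤ X := by
  simp [ell, Finset.sup_le_iff]

theorem le_ell {T : Finset (Sym2 ℕ)} {f : Sym2 ℕ} {v : ℕ} (hf : f ∈ T) (hv : v ∈ f) :
    c f v ≤ ell c T v :=
  ell_le_iff.1 le_rfl f hf hv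

theorem ell_edges_eq_zero {G : SimpleGraph ℕ} {a b w : ℕ} (Q : G.Walk a b)
    (hw : w ∉ Q.support) : ell c Q.edges.toFinset w = 0 :=
  le_antisymm (ell_le_iff.2 fun _ hf hwf =>
    absurd (Q.mem_support_of_mem_edges (List.mem_toFinset.1 hf) hwf) hw) zero_le

theorem chordLevel_eq_ell {d : ℕ × ℕ × NNReal × NNReal} {T : Finset (Sym2 ℕ)} {v : ℕ}
    (h₁ : ell c T d.1 = d.2.2.1) (h₂ : ell c T d.2.1 = d.2.2.2) (hv : d.1 = v ∨ d.2.1 = v) :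
    chordLevel d v = ell c T v := by
  unfold chordLevel
  split_ifs with h
  · rw [← h, h₁]
  · rw [← hv.resolve_left h, h₂]

theorem endpointLevel_le_iff {D : Finset (ℕ × ℕ × NNReal × NNReal)} {v : ℕ} {X : NNReal} :
    endpointLevel D v ≤ X ↔ ∀ d ∈ D, d.1 = v ∨ d.2.1 = v → chordLevel d v ≤ X := by
  simp [endpointLevel, Finset.sup_le_iff]

theorem le_endpointLevel {D : Finset (ℕ × ℕ × NNReal × NNReal)} {d : ℕ × ℕ × NNReal × NNReal}
    {v : ℕ} (hd : d ∈ D) (hv : d.1 = v ∨ d.2.1 = v) : chordLevel d v ≤ endpointLevel D v :=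
  endpointLevel_le_iff.1 le_rfl d hd hv

theorem cost2_eq (D : Finset (ℕ × ℕ × NNReal × NNReal)) :
    Cost2 E0 c Vfin P D = ∑ v ∈ Vfin, endpointLevel D v + ∑ d ∈ D, mcost E0 c Vfin P d :=
  rfl

theorem augmentedGraph_le {F : Finset (Sym2 ℕ)} (hF : F ⊆ E0) :
    augmentedGraph P F ≤ fromEdgeSet (↑E0 : Set (Sym2 ℕ)) := by
  refine fromEdgeSet_mono (Set.union_subset (by simpa using hF) fun e he => ?_)
  have := P.edges_subset_edgeSet he
  rw [edgeSet_fromEdgeSet] at this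
  exact this.1

theorem mem_augmentedGraph_edgeSet_of_mem_edges {F : Finset (Sym2 ℕ)} {f : Sym2 ℕ}
    (hf : f ∈ P.edges) : f ∈ (augmentedGraph P F).edgeSet := by
  rw [edgeSet_fromEdgeSet]
  exact ⟨.inr hf, not_isDiag_of_mem_edgeSet _ (P.edges_subset_edgeSet hf)⟩

theorem augmentedGraph_edgeSet_finite (F : Finset (Sym2 ℕ)) :
    (augmentedGraph P F).edgeSet.Finite := by
  rw [edgeSet_fromEdgeSet]
  exact (F.finite_toSet.union P.edges.finite_toSet).subset Set.sdiff_subset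

/-- Only the internal nodes of an attachment path lie off `P`. -/
theorem sum_sdiff_ell_eq_sum_offPath {u v : ℕ}
    {Q : (fromEdgeSet (↑E0 : Set (Sym2 ℕ))).Walk u v} (hQ : IsAttach E0 P u v Q) :
    ∑ w ∈ Vfin \ {u, v}, ell c Q.edges.toFinset w =
      ∑ w ∈ Vfin with w ∉ P.support, ell c Q.edges.toFinset w := by
  obtain ⟨-, hu, hv, hint⟩ := hQ
  refine (Finset.sum_subset (fun w hw => ?_) fun w hw hw' => ?_).symm
  · simp only [Finset.mem_filter] at hw
    simp only [Finset.mem_sdiff, Finset.mem_insert, Finset.mem_singleton]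
    exact ⟨hw.1, by rintro (rfl | rfl) <;> exact hw.2 ‹_›⟩
  · simp only [Finset.mem_sdiff, Finset.mem_insert, Finset.mem_singleton, not_or] at hw
    simp only [Finset.mem_filter, hw.1, true_and, not_not] at hw'
    exact ell_edges_eq_zero Q fun hwQ => hint w hwQ hw.2.1 hw.2.2 hw'

theorem mcost_chordOf_le {x : Σ u v : ℕ, (fromEdgeSet (↑E0 : Set (Sym2 ℕ))).Walk u v}
    (hx : IsAttach E0 P x.1 x.2.1 x.2.2) :
    mcost E0 c Vfin P (chordOf c x) ≤
      ∑ w ∈ Vfin with w ∉ P.support, ell c x.2.2.edges.toFinset w := by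
  rw [← sum_sdiff_ell_eq_sum_offPath hx]
  exact csInf_le (OrderBot.bddBelow _) ⟨x.2.2, hx, rfl, rfl, rfl⟩

/-- The infimum defining `mcost` is attained, since only finitely many edge sets occur. -/
theorem ChordOK.exists_mcost_eq {d : ℕ × ℕ × NNReal × NNReal} (h : ChordOK E0 c P d) :
    ∃ Q : (fromEdgeSet (↑E0 : Set (Sym2 ℕ))).Walk d.1 d.2.1, IsAttach E0 P d.1 d.2.1 Q ∧
      ell c Q.edges.toFinset d.1 = d.2.2.1 ∧ ell c Q.edges.toFinset d.2.1 = d.2.2.2 ∧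
      mcost E0 c Vfin P d = ∑ w ∈ Vfin with w ∉ P.support, ell c Q.edges.toFinset w := by
  have hfin : {a | ∃ Q : (fromEdgeSet (↑E0 : Set (Sym2 ℕ))).Walk d.1 d.2.1,
      IsAttach E0 P d.1 d.2.1 Q ∧ ell c Q.edges.toFinset d.1 = d.2.2.1 ∧
      ell c Q.edges.toFinset d.2.1 = d.2.2.2 ∧
      a = ∑ w ∈ Vfin \ {d.1, d.2.1}, ell c Q.edges.toFinset w}.Finite := by
    refine (E0.powerset.finite_toSet.image
      fun T => ∑ w ∈ Vfin \ {d.1, d.2.1}, ell c T w).subset ?_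
    rintro a ⟨Q, -, -, -, rfl⟩
    refine ⟨Q.edges.toFinset, Finset.mem_powerset.2 fun f hf => ?_, rfl⟩
    have := Q.edges_subset_edgeSet (List.mem_toFinset.1 hf)
    rw [edgeSet_fromEdgeSet] at this
    exact this.1
  obtain ⟨Q, hQ, h₁, h₂⟩ := h
  obtain ⟨Q, hQ, h₁, h₂, hmin⟩ :=
    Set.Nonempty.csInf_mem (by exact ⟨_, Q, hQ, h₁, h₂, rfl⟩) hfin
  exact ⟨Q, hQ, h₁, h₂, hmin.trans (sum_sdiff_ell_eq_sum_offPath hQ)⟩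

/-- A path between two nodes of `P` splits at its nodes on `P` into attachment paths; the hat
walk runs through their endpoints. -/
theorem exists_attach_decomposition {u z : ℕ} (W : (fromEdgeSet (↑E0 : Set (Sym2 ℕ))).Walk u z)
    (hW : W.IsPath) (hu : u ∈ P.support) (hz : z ∈ P.support) :
    ∃ L : List (Σ a b : ℕ, (fromEdgeSet (↑E0 : Set (Sym2 ℕ))).Walk a b),
      (∀ x ∈ L, IsAttach E0 P x.1 x.2.1 x.2.2 ∧ x.2.2.edges ⊆ W.edges) ∧
      L.Pairwise (OffPathDisjoint P) ∧
      ∃ Wh : (fromEdgeSet {e | ∃ x ∈ L, e = s(x.1, x.2.1)}).Walk u z, Wh.support ⊆ W.support := by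
  obtain ⟨n, hn⟩ : ∃ n, W.length = n := ⟨_, rfl⟩
  induction n using Nat.strong_induction_on generalizing u with
  | _ n ih =>
  cases W with
  | nil => exact ⟨[], by simp, .nil, .nil, by simp⟩
  | cons hub W₁ =>
    obtain ⟨v, hv, ρ, σ, rfl, hρ⟩ :=
      W₁.exists_eq_append_of_exists_mem_support {w | w ∈ P.support} ⟨z, W₁.end_mem_support, hz⟩
    have hW' : ((Walk.cons hub ρ).append σ).IsPath := hW
    obtain ⟨L, hL, hLpair, Wh, hWh⟩ :=
      ih σ.length (by simp [← hn, Walk.length_append]) σ hW'.of_append_right hv rfl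
    have hQ : IsAttach E0 P u v (.cons hub ρ) := by
      refine ⟨hW'.of_append_left, hu, hv, fun w hw hwu hwv hwP => hwv (hρ w ?_ hwP)⟩
      simpa [hwu] using hw
    have huv : u ≠ v := fun h => (Walk.cons_isPath_iff _ _).1 hQ.1 |>.2 (h ▸ ρ.end_mem_support)
    set L' := ⟨u, v, .cons hub ρ⟩ :: L
    have hadj : (fromEdgeSet {e | ∃ x ∈ L', e = s(x.1, x.2.1)}).Adj u v :=
      (fromEdgeSet_adj _).2 ⟨⟨_, List.mem_cons_self, rfl⟩, huv⟩
    have hle : fromEdgeSet {e | ∃ x ∈ L, e = s(x.1, x.2.1)} ≤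
        fromEdgeSet {e | ∃ x ∈ L', e = s(x.1, x.2.1)} :=
      fromEdgeSet_mono fun e ⟨x, hx, he⟩ => ⟨x, List.mem_cons_of_mem _ hx, he⟩
    refine ⟨L', ?_, ?_, .cons hadj (Wh.mapLe hle), ?_⟩
    · simp only [L', List.mem_cons, forall_eq_or_imp]
      refine ⟨⟨hQ, by simp [Walk.edges_append]⟩, fun x hx => ⟨(hL x hx).1, ?_⟩⟩
      exact List.Subset.trans (hL x hx).2 (by simp [Walk.edges_append])
    · refine List.Pairwise.cons (fun y hy r hr hry => by_contra fun hrP => hrP ?_) hLpair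
      have hrσ := Walk.mem_support_of_edges_subset (hL y hy).2 hry
        (by rintro rfl; exact hrP (hL y hy).1.2.2.1)
      exact hW'.eq_of_mem_support_append hr hrσ ▸ hv
    · intro r hr
      simp only [Walk.support_cons, Walk.support_mapLe_eq_support, List.mem_cons] at hr
      rcases hr with rfl | hr
      · exact Walk.start_mem_support _
      · exact List.mem_cons_of_mem _ ((Walk.mem_support_append_iff _ _).2 (.inr (hWh hr)))

theorem pairwise_offPathDisjoint_append {p q : (fromEdgeSet (↑E0 : Set (Sym2 ℕ))).Walk s t}
    (hpq : ∀ r ∈ p.support, r ∈ q.support → r = s ∨ r = t)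
    {Lp Lq : List (Σ a b : ℕ, (fromEdgeSet (↑E0 : Set (Sym2 ℕ))).Walk a b)}
    (hLp : ∀ x ∈ Lp, IsAttach E0 P x.1 x.2.1 x.2.2 ∧ x.2.2.edges ⊆ p.edges)
    (hLq : ∀ x ∈ Lq, IsAttach E0 P x.1 x.2.1 x.2.2 ∧ x.2.2.edges ⊆ q.edges)
    (hLp' : Lp.Pairwise (OffPathDisjoint P)) (hLq' : Lq.Pairwise (OffPathDisjoint P)) :
    (Lp ++ Lq).Pairwise (OffPathDisjoint P) := by
  refine List.pairwise_append.2 ⟨hLp', hLq', fun x hx y hy r hrx hry => by_contra fun hrP => ?_⟩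
  have hrp := Walk.mem_support_of_edges_subset (hLp x hx).2 hrx
    (by rintro rfl; exact hrP (hLp x hx).1.2.2.1)
  have hrq := Walk.mem_support_of_edges_subset (hLq y hy).2 hry
    (by rintro rfl; exact hrP (hLq y hy).1.2.2.1)
  rcases hpq r hrp hrq with rfl | rfl
  exacts [hrP P.start_mem_support, hrP P.end_mem_support]

theorem cost2_image_chordOf_le (hPzero : ∀ e ∈ P.edges, ∀ v, c e v = 0)
    {F : Finset (Sym2 ℕ)} {L : List (Σ a b : ℕ, (fromEdgeSet (↑E0 : Set (Sym2 ℕ))).Walk a b)}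
    (hL : ∀ x ∈ L, IsAttach E0 P x.1 x.2.1 x.2.2 ∧ ∀ f ∈ x.2.2.edges, f ∈ F ∨ f ∈ P.edges)
    (hpair : L.Pairwise (OffPathDisjoint P)) :
    Cost2 E0 c Vfin P (L.toFinset.image (chordOf c)) ≤ Cost1 c Vfin F := by
  classical
  have hell : ∀ x ∈ L, ∀ v, ell c x.2.2.edges.toFinset v ≤ ell c F v := fun x hx v =>
    ell_le_iff.2 fun f hf hvf => by
      rcases (hL x hx).2 f (List.mem_toFinset.1 hf) with hfF | hfP
      · exact le_ell hfF hvf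
      · rw [hPzero f hfP v]
        exact zero_le
  have hendpoint : ∀ v, endpointLevel (L.toFinset.image (chordOf c)) v ≤
      if v ∈ P.support then ell c F v else 0 := by
    refine fun v => endpointLevel_le_iff.2 fun d hd hvd => ?_
    obtain ⟨x, hx, rfl⟩ : ∃ x ∈ L, chordOf c x = d := by simpa using hd
    have hvP : v ∈ P.support := by
      rcases hvd with h | h
      exacts [h ▸ (hL x hx).1.2.1, h ▸ (hL x hx).1.2.2.1]
    rw [if_pos hvP, chordLevel_eq_ell (c := c) (T := x.2.2.edges.toFinset) rfl rfl hvd]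
    exact hell x hx v
  rw [cost2_eq, Cost1, ← Finset.sum_filter_add_sum_filter_not Vfin (· ∈ P.support) (ell c F)]
  refine add_le_add ?_ ?_
  · rw [Finset.sum_filter]
    exact Finset.sum_le_sum fun v _ => hendpoint v
  calc ∑ d ∈ L.toFinset.image (chordOf c), mcost E0 c Vfin P d
      ≤ ∑ x ∈ L.toFinset, mcost E0 c Vfin P (chordOf c x) :=
        Finset.sum_image_le_of_nonneg fun _ _ => zero_le
    _ ≤ ∑ x ∈ L.toFinset, ∑ w ∈ Vfin with w ∉ P.support, ell c x.2.2.edges.toFinset w :=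
        Finset.sum_le_sum fun x hx => mcost_chordOf_le (hL x (List.mem_toFinset.1 hx)).1
    _ = ∑ w ∈ Vfin with w ∉ P.support, ∑ x ∈ L.toFinset, ell c x.2.2.edges.toFinset w :=
        Finset.sum_comm
    _ ≤ ∑ w ∈ Vfin with w ∉ P.support, ell c F w := by
        refine Finset.sum_le_sum fun w hw => Finset.sum_le_of_subsingleton_ne_zero
          (fun x hx => hell x (List.mem_toFinset.1 hx) w) fun x hx y hy hxw hyw => ?_
        by_contra hxy
        refine (Finset.mem_filter.1 hw).2 (hpair.forall (List.mem_toFinset.1 hx)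
          (List.mem_toFinset.1 hy) hxy w ?_ ?_)
        exacts [by_contra fun h => hxw (ell_edges_eq_zero _ h),
          by_contra fun h => hyw (ell_edges_eq_zero _ h)]

theorem fromEdgeSet_le_contractedGraph
    {L L' : List (Σ a b : ℕ, (fromEdgeSet (↑E0 : Set (Sym2 ℕ))).Walk a b)} (h : L ⊆ L') :
    fromEdgeSet {e | ∃ x ∈ L, e = s(x.1, x.2.1)} ≤
      contractedGraph P (L'.toFinset.image (chordOf c)) := by
  classical
  refine fromEdgeSet_mono fun e ⟨x, hx, he⟩ => .inr ⟨chordOf c x, ?_, he⟩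
  exact Finset.mem_image.2 ⟨x, List.mem_toFinset.2 (h hx), rfl⟩

theorem exists_feas2_le_of_feas1 (hPzero : ∀ e ∈ P.edges, ∀ v, c e v = 0)
    {F : Finset (Sym2 ℕ)} (hF : Feas1 E0 P F) :
    ∃ D, Feas2 E0 c P D ∧ Cost2 E0 c Vfin P D ≤ Cost1 c Vfin F := by
  classical
  obtain ⟨hFE0, p, q, hp, hq, hpq⟩ := hF
  have hle := augmentedGraph_le (P := P) hFE0
  obtain ⟨Lp, hLp, hLp', Whp, hWhp⟩ := exists_attach_decomposition (p.mapLe hle)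
    (hp.mapLe hle) P.start_mem_support P.end_mem_support
  obtain ⟨Lq, hLq, hLq', Whq, hWhq⟩ := exists_attach_decomposition (q.mapLe hle)
    (hq.mapLe hle) P.start_mem_support P.end_mem_support
  have hedges : ∀ (W : (augmentedGraph P F).Walk s t), ∀ f ∈ (W.mapLe hle).edges,
      f ∈ F ∨ f ∈ P.edges := fun W f hf => by
    have := W.edges_subset_edgeSet (by simpa using hf)
    rw [edgeSet_fromEdgeSet] at this
    exact this.1
  have hL : ∀ x ∈ Lp ++ Lq, IsAttach E0 P x.1 x.2.1 x.2.2 ∧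
      ∀ f ∈ x.2.2.edges, f ∈ F ∨ f ∈ P.edges := by
    intro x hx
    rcases List.mem_append.1 hx with hx | hx
    · exact ⟨(hLp x hx).1, fun f hf => hedges p f ((hLp x hx).2 hf)⟩
    · exact ⟨(hLq x hx).1, fun f hf => hedges q f ((hLq x hx).2 hf)⟩
  have hpair := pairwise_offPathDisjoint_append (by simpa using hpq) hLp hLq hLp' hLq'
  refine ⟨(Lp ++ Lq).toFinset.image (chordOf c), ⟨fun d hd => ?_, ?_⟩,
    cost2_image_chordOf_le hPzero hL hpair⟩
  · obtain ⟨x, hx, rfl⟩ : ∃ x ∈ Lp ++ Lq, chordOf c x = d := by simpa using hd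
    exact ⟨x.2.2, (hL x hx).1, rfl, rfl⟩
  · let Wp := (Whp.mapLe (fromEdgeSet_le_contractedGraph (P := P) (c := c) (L' := Lp ++ Lq)
      (List.subset_append_left _ _))).bypass
    let Wq := (Whq.mapLe (fromEdgeSet_le_contractedGraph (P := P) (c := c) (L' := Lp ++ Lq)
      (List.subset_append_right _ _))).bypass
    refine ⟨Wp, Wq, Walk.bypass_isPath _, Walk.bypass_isPath _, fun r hr hr' => hpq r ?_ ?_⟩
    · simpa using hWhp (by simpa using Walk.support_bypass_subset_support _ hr)
    · simpa using hWhq (by simpa using Walk.support_bypass_subset_support _ hr')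

/-- Replacing every chord of a hat walk by an attachment path realizing it adds only nodes
off `P`. -/
theorem exists_walk_augmentedGraph {F : Finset (Sym2 ℕ)} {D : Finset (ℕ × ℕ × NNReal × NNReal)}
    (Q : ∀ d ∈ D, (fromEdgeSet (↑E0 : Set (Sym2 ℕ))).Walk d.1 d.2.1)
    (hQ : ∀ d hd, IsAttach E0 P d.1 d.2.1 (Q d hd)) (hQF : ∀ d hd, ∀ f ∈ (Q d hd).edges, f ∈ F)
    {u z : ℕ} (Wh : (contractedGraph P D).Walk u z) :
    ∃ W : (augmentedGraph P F).Walk u z, ∀ r ∈ W.support, r ∈ Wh.support ∨ r ∉ P.support := by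
  have hchord : ∀ d ∈ D, ∃ Q' : (augmentedGraph P F).Walk d.1 d.2.1,
      ∀ r ∈ Q'.support, r = d.1 ∨ r = d.2.1 ∨ r ∉ P.support := fun d hd => by
    refine ⟨(Q d hd).transfer _ fun f hf => ?_, fun r hr => ?_⟩
    · rw [edgeSet_fromEdgeSet]
      exact ⟨.inl (hQF d hd f hf), not_isDiag_of_mem_edgeSet _ ((Q d hd).edges_subset_edgeSet hf)⟩
    · rw [Walk.support_transfer] at hr
      by_cases h₁ : r = d.1
      · exact .inl h₁
      by_cases h₂ : r = d.2.1
      · exact .inr (.inl h₂)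
      exact .inr (.inr ((hQ d hd).2.2.2 r hr h₁ h₂))
  induction Wh with
  | nil => exact ⟨.nil, by simp⟩
  | @cons u u' z hadj Wh ih =>
    obtain ⟨W, hW⟩ := ih
    obtain ⟨Q', hQ'⟩ : ∃ Q' : (augmentedGraph P F).Walk u u',
        ∀ r ∈ Q'.support, r = u ∨ r = u' ∨ r ∉ P.support := by
      obtain ⟨hPe | ⟨d, hd, he⟩, hne⟩ := (fromEdgeSet_adj _).1 hadj
      · exact ⟨.cons ((fromEdgeSet_adj _).2 ⟨.inr hPe, hne⟩) .nil, by simp⟩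
      obtain ⟨Q', hQ'⟩ := hchord d hd
      rcases Sym2.eq_iff.1 he with ⟨rfl, rfl⟩ | ⟨rfl, rfl⟩
      · exact ⟨Q', hQ'⟩
      · exact ⟨Q'.reverse, fun r hr => by simpa [or_left_comm] using hQ' r (by simpa using hr)⟩
    refine ⟨Q'.append W, fun r hr => ?_⟩
    rcases (Walk.mem_support_append_iff _ _).1 hr with h | h
    · rcases hQ' r h with rfl | rfl | h
      exacts [.inl (by simp), .inl (by simp), .inr h]
    · rcases hW r h with h | h
      exacts [.inl (by simp [h]), .inr h]

theorem cost1_biUnion_le_cost2 {D : Finset (ℕ × ℕ × NNReal × NNReal)}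
    (Q : ∀ d ∈ D, (fromEdgeSet (↑E0 : Set (Sym2 ℕ))).Walk d.1 d.2.1)
    (hQ : ∀ d hd, IsAttach E0 P d.1 d.2.1 (Q d hd) ∧
      ell c (Q d hd).edges.toFinset d.1 = d.2.2.1 ∧ ell c (Q d hd).edges.toFinset d.2.1 = d.2.2.2 ∧
      mcost E0 c Vfin P d = ∑ w ∈ Vfin with w ∉ P.support, ell c (Q d hd).edges.toFinset w) :
    Cost1 c Vfin (D.attach.biUnion fun d => (Q d.1 d.2).edges.toFinset) ≤
      Cost2 E0 c Vfin P D := by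
  classical
  set F := D.attach.biUnion fun d => (Q d.1 d.2).edges.toFinset
  have hF : ∀ {f}, f ∈ F → ∃ d ∈ D.attach, f ∈ (Q d.1 d.2).edges.toFinset :=
    Finset.mem_biUnion.1
  rw [cost2_eq, Cost1, ← Finset.sum_filter_add_sum_filter_not Vfin (· ∈ P.support) (ell c F)]
  refine add_le_add ?_ ?_
  · refine le_trans (Finset.sum_le_sum fun v hv => ell_le_iff.2 fun f hf hvf => ?_)
      (Finset.sum_le_sum_of_subset (Finset.filter_subset _ Vfin))
    obtain ⟨⟨d, hd⟩, -, hfd⟩ := hF hf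
    have hvd : d.1 = v ∨ d.2.1 = v := by
      by_contra! h
      exact (hQ d hd).1.2.2.2 v ((Q d hd).mem_support_of_mem_edges (List.mem_toFinset.1 hfd) hvf)
        h.1.symm h.2.symm (Finset.mem_filter.1 hv).2
    calc c f v ≤ ell c (Q d hd).edges.toFinset v := le_ell hfd hvf
      _ = chordLevel d v := (chordLevel_eq_ell (hQ d hd).2.1 (hQ d hd).2.2.1 hvd).symm
      _ ≤ endpointLevel D v := le_endpointLevel hd hvd
  calc ∑ v ∈ Vfin with v ∉ P.support, ell c F v
      ≤ ∑ v ∈ Vfin with v ∉ P.support, ∑ d ∈ D.attach, ell c (Q d.1 d.2).edges.toFinset v := by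
        refine Finset.sum_le_sum fun v _ => ell_le_iff.2 fun f hf hvf => ?_
        obtain ⟨d, hd, hfd⟩ := hF hf
        exact (le_ell hfd hvf).trans (Finset.single_le_sum
          (f := fun d : D => ell c (Q d.1 d.2).edges.toFinset v) (fun _ _ => zero_le) hd)
    _ = ∑ d ∈ D.attach, mcost E0 c Vfin P d.1 := by
        rw [Finset.sum_comm]
        exact Finset.sum_congr rfl fun d _ => (hQ d.1 d.2).2.2.2.symm
    _ = ∑ d ∈ D, mcost E0 c Vfin P d := Finset.sum_attach D _

theorem exists_feas1_le_of_feas2 (hst : s ≠ t) {D : Finset (ℕ × ℕ × NNReal × NNReal)}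
    (hD : Feas2 E0 c P D) : ∃ F, Feas1 E0 P F ∧ Cost1 c Vfin F ≤ Cost2 E0 c Vfin P D := by
  classical
  obtain ⟨hOK, ph, qh, hph, hqh, hdisj⟩ := hD
  choose Q hQ using fun d hd => (hOK d hd).exists_mcost_eq (Vfin := Vfin)
  set F := D.attach.biUnion fun d => (Q d.1 d.2).edges.toFinset
  have hQF : ∀ d hd, ∀ f ∈ (Q d hd).edges, f ∈ F := fun d hd f hf =>
    Finset.mem_biUnion.2 ⟨⟨d, hd⟩, Finset.mem_attach _ _, List.mem_toFinset.2 hf⟩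
  have hFE0 : F ⊆ E0 := fun f hf => by
    obtain ⟨d, -, hfd⟩ := Finset.mem_biUnion.1 hf
    have := (Q d.1 d.2).edges_subset_edgeSet (List.mem_toFinset.1 hfd)
    rw [edgeSet_fromEdgeSet] at this
    exact this.1
  refine ⟨F, ⟨hFE0, ?_⟩, cost1_biUnion_le_cost2 Q hQ⟩
  let PF := P.transfer (augmentedGraph P F) fun _ => mem_augmentedGraph_edgeSet_of_mem_edges
  refine twoDisjointPaths_of_forall_exists_walk_notMem (augmentedGraph_edgeSet_finite F) hst PF
    fun w hws hwt => ?_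
  by_cases hwP : w ∈ P.support
  · have hw : w ∉ ph.support ∨ w ∉ qh.support := by
      by_contra! h
      rcases hdisj w h.1 h.2 with h | h
      exacts [hws h, hwt h]
    rcases hw with h | h
    · obtain ⟨W, hW⟩ := exists_walk_augmentedGraph Q (fun d hd => (hQ d hd).1) hQF ph
      exact ⟨W, fun hw => (hW w hw).elim h (· hwP)⟩
    · obtain ⟨W, hW⟩ := exists_walk_augmentedGraph Q (fun d hd => (hQ d hd).1) hQF qh
      exact ⟨W, fun hw => (hW w hw).elim h (· hwP)⟩
  · exact ⟨PF, by simpa [PF] using hwP⟩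

end Contraction

theorem stmt15_general (E0 : Finset (Sym2 ℕ)) (c : Sym2 ℕ → ℕ → NNReal)
    (Vfin : Finset ℕ)
    (s t : ℕ) (hst : s ≠ t)
    (P : (fromEdgeSet (↑E0 : Set (Sym2 ℕ))).Walk s t)
    (hPzero : ∀ e ∈ P.edges, ∀ v, c e v = 0) :
    (∀ F, Feas1 E0 P F → ∃ D, Feas2 E0 c P D ∧
        Cost2 E0 c Vfin P D ≤ Cost1 c Vfin F) ∧
    (∀ D, Feas2 E0 c P D → ∃ F, Feas1 E0 P F ∧
        Cost1 c Vfin F ≤ Cost2 E0 c Vfin P D) ∧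
    sInf {a : ENNReal | ∃ F, Feas1 E0 P F ∧ a = (Cost1 c Vfin F : ENNReal)}
      = sInf {a : ENNReal | ∃ D, Feas2 E0 c P D ∧ a = (Cost2 E0 c Vfin P D : ENNReal)} := by
  have h₁ : ∀ F, Feas1 E0 P F → ∃ D, Feas2 E0 c P D ∧ Cost2 E0 c Vfin P D ≤ Cost1 c Vfin F :=
    fun _ hF => exists_feas2_le_of_feas1 hPzero hF
  have h₂ : ∀ D, Feas2 E0 c P D → ∃ F, Feas1 E0 P F ∧ Cost1 c Vfin F ≤ Cost2 E0 c Vfin P D :=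
    fun _ hD => exists_feas1_le_of_feas2 hst hD
  refine ⟨h₁, h₂, sInf_eq_of_forall_exists_le (fun F hF => ?_) fun D hD => ?_⟩
  · obtain ⟨D, hD, hle⟩ := h₁ F hF
    exact ⟨D, hD, ENNReal.coe_le_coe.2 hle⟩
  · obtain ⟨F, hF, hle⟩ := h₂ D hD
    exact ⟨F, hF, ENNReal.coe_le_coe.2 hle⟩

/-- Equivalence of the attachment-path contraction: every feasible solution of `𝓘` can be
converted into a feasible solution of the contracted 3-cost Hamiltonian instance `𝓘̂` of no
greater total cost, and vice versa; in particular the two instances have equal optimal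
values. -/
theorem stmt15 (E0 : Finset (Sym2 ℕ)) (c : Sym2 ℕ → ℕ → NNReal)
    (Vfin : Finset ℕ) (hV : ∀ e ∈ E0, ∀ v, v ∈ e → v ∈ Vfin)
    (s t : ℕ) (hst : s ≠ t)
    (P : (fromEdgeSet (↑E0 : Set (Sym2 ℕ))).Walk s t) (hP : P.IsPath)
    (hPzero : ∀ e ∈ P.edges, ∀ v, c e v = 0) :
    (∀ F, Feas1 E0 P F → ∃ D, Feas2 E0 c P D ∧
        Cost2 E0 c Vfin P D ≤ Cost1 c Vfin F) ∧
    (∀ D, Feas2 E0 c P D → ∃ F, Feas1 E0 P F ∧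
        Cost1 c Vfin F ≤ Cost2 E0 c Vfin P D) ∧
    sInf {a : ENNReal | ∃ F, Feas1 E0 P F ∧ a = (Cost1 c Vfin F : ENNReal)}
      = sInf {a : ENNReal | ∃ D, Feas2 E0 c P D ∧ a = (Cost2 E0 c Vfin P D : ENNReal)} :=
  stmt15_general E0 c Vfin s t hst P hPzero
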